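/- arXiv:2208.02672 — 3 statements merged into one kernel-verified Lean document; each statement's English description precedes it below -/
import Mathlib

section
/- Soundness of IFbCOO (Theorem 1): if an abstract expression eA : [Γ; T] is fully refined, by a finite sequence of IFbCOO core refinement steps, to a concrete expression e, then e is well typed in SIFO with the annotated type, i.e. Γ ⊢ e : T. -/
/-! SIFO core calculus: security levels form a bounded upper semilattice `L`
(with `lub = ⊔`), class names `Cl` are partially ordered by subclassing,
variables, field names and method names are strings. -/

/-- Type modifiers. -/
inductive Mdf : Type where
  | mut | imm | capsule | read
  deriving DecidableEq

/-- Order on modifiers: `capsule ≤ mdf` and `mdf ≤ read` for every `mdf`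
(together with reflexivity). -/
def Mdf.Le (a b : Mdf) : Prop := a = b ∨ a = Mdf.capsule ∨ b = Mdf.read

/-- Modifier composition `mdf0 ▷ mdf1 = mdf`:
`mut ▷ mdf = capsule ▷ mdf = mdf`, `imm ▷ mdf = mdf ▷ imm = imm`,
`read ▷ mut = read`. -/
inductive MdfComp : Mdf → Mdf → Mdf → Prop where
  | mutL (m : Mdf) : MdfComp Mdf.mut m m
  | capsuleL (m : Mdf) : MdfComp Mdf.capsule m m
  | immL (m : Mdf) : MdfComp Mdf.imm m Mdf.imm
  | immR (m : Mdf) : MdfComp m Mdf.imm Mdf.imm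
  | readMut : MdfComp Mdf.read Mdf.mut Mdf.read

/-- A type `s mdf C`: a security level, a modifier and a class. -/
structure Ty (L Cl : Type) where
  sec : L
  mdf : Mdf
  cls : Cl

/-- Subtyping: `s mdf C ≤ s mdf' C'` iff `C` is a subclass of `C'` and `mdf ≤ mdf'`. -/
def Ty.Sub {L Cl : Type} [PartialOrder Cl] (T T' : Ty L Cl) : Prop :=
  T.sec = T'.sec ∧ T.cls ≤ T'.cls ∧ T.mdf.Le T'.mdf

/-- `T[s]`: for `T = s' mdf C`, `T[s] = lub(s, s') mdf C`. -/
def Ty.promote {L Cl : Type} [SemilatticeSup L] (T : Ty L Cl) (s : L) : Ty L Cl :=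
  ⟨s ⊔ T.sec, T.mdf, T.cls⟩

/-- Replace the modifier `mut` by `read` in a type. -/
def Ty.mutToRead {L Cl : Type} (T : Ty L Cl) : Ty L Cl :=
  if T.mdf = Mdf.mut then ⟨T.sec, Mdf.read, T.cls⟩ else T

/-- Typing contexts: maps from variables to types. -/
abbrev Ctx (L Cl : Type) := String → Option (Ty L Cl)

/-- `Γ[mut\read]`: replace every modifier `mut` in `Γ` by `read`. -/
def Ctx.mutToRead {L Cl : Type} (Γ : Ctx L Cl) : Ctx L Cl :=
  fun x => (Γ x).map Ty.mutToRead

/-- Expressions: variables, field accesses, field assignments, method calls,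
constructions `new s C(…)`, and abstract expressions annotated with `[Γ; T]`. -/
inductive Exp (L Cl : Type) where
  | var (x : String)
  | fieldAcc (e0 : Exp L Cl) (f : String)
  | fieldAsgn (e0 : Exp L Cl) (f : String) (e1 : Exp L Cl)
  | call (e0 : Exp L Cl) (m : String) (args : List (Exp L Cl))
  | new (s : L) (C : Cl) (args : List (Exp L Cl))
  | abs (Γ : Ctx L Cl) (T : Ty L Cl)

/-- An expression is concrete if it contains no abstract subexpression. -/
inductive Concrete {L Cl : Type} : Exp L Cl → Prop where
  | var (x) : Concrete (Exp.var x)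
  | fieldAcc {e0 f} : Concrete e0 → Concrete (Exp.fieldAcc e0 f)
  | fieldAsgn {e0 f e1} : Concrete e0 → Concrete e1 →
      Concrete (Exp.fieldAsgn e0 f e1)
  | call {e0 m args} : Concrete e0 → (∀ e ∈ args, Concrete e) →
      Concrete (Exp.call e0 m args)
  | new {s C args} : (∀ e ∈ args, Concrete e) → Concrete (Exp.new s C args)

/-- SIFO typing `Γ ⊢ e : T`, relative to a class table given by `fields` and
`methTypes` (a method type `T0 … Tn → T` is represented as `(T0 :: [T1, …, Tn], T)`). -/
inductive Typing {L Cl : Type} [SemilatticeSup L] [PartialOrder Cl]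
    (fields : Cl → List (String × Ty L Cl))
    (methTypes : Cl → String → Set (List (Ty L Cl) × Ty L Cl)) :
    Ctx L Cl → Exp L Cl → Ty L Cl → Prop where
  | var {Γ x T} : Γ x = some T → Typing fields methTypes Γ (Exp.var x) T
  | fieldAcc {Γ e0 s0 mdf0 C0 f s1 mdf1 C1 mdf} :
      Typing fields methTypes Γ e0 ⟨s0, mdf0, C0⟩ →
      (f, (⟨s1, mdf1, C1⟩ : Ty L Cl)) ∈ fields C0 →
      MdfComp mdf0 mdf1 mdf →
      Typing fields methTypes Γ (Exp.fieldAcc e0 f) ⟨s0 ⊔ s1, mdf, C1⟩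
  | fieldAsgn {Γ e0 s0 C0 f s mdf C e1} :
      Typing fields methTypes Γ e0 ⟨s0, Mdf.mut, C0⟩ →
      (f, (⟨s, mdf, C⟩ : Ty L Cl)) ∈ fields C0 →
      Typing fields methTypes Γ e1 ⟨s0 ⊔ s, mdf, C⟩ →
      Typing fields methTypes Γ (Exp.fieldAsgn e0 f e1) ⟨s0 ⊔ s, mdf, C⟩
  | call {Γ e0 T0 m args Ts T} :
      Typing fields methTypes Γ e0 T0 →
      args.length = Ts.length →
      (∀ p ∈ args.zip Ts, Typing fields methTypes Γ p.1 p.2) →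
      (T0 :: Ts, T) ∈ methTypes T0.cls m →
      T0.sec ≤ T.sec →
      (∀ Ti ∈ Ts, (Ti.mdf = Mdf.mut ∨ Ti.mdf = Mdf.capsule) → T0.sec ≤ Ti.sec) →
      Typing fields methTypes Γ (Exp.call e0 m args) T
  | new {Γ s C args} :
      args.length = (fields C).length →
      (∀ p ∈ args.zip (fields C), Typing fields methTypes Γ p.1 (Ty.promote p.2.2 s)) →
      Typing fields methTypes Γ (Exp.new s C args) ⟨s, Mdf.mut, C⟩
  | prom {Γ e s C} :
      Typing fields methTypes (Ctx.mutToRead Γ) e ⟨s, Mdf.mut, C⟩ →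
      Typing fields methTypes Γ e ⟨s, Mdf.capsule, C⟩
  | secProm {Γ e s' s mdf C} :
      Typing fields methTypes Γ e ⟨s', mdf, C⟩ →
      (mdf = Mdf.imm ∨ mdf = Mdf.capsule) → s' ≤ s →
      Typing fields methTypes Γ e ⟨s, mdf, C⟩
  | sub {Γ e T' T} :
      Typing fields methTypes Γ e T' → Ty.Sub T' T →
      Typing fields methTypes Γ e T

/-- IFbCOO core one-step refinement, closed under arbitrary expression
contexts (the last six constructors form the Context rule). -/
inductive Refine1 {L Cl : Type} [SemilatticeSup L] [PartialOrder Cl]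
    (fields : Cl → List (String × Ty L Cl))
    (methTypes : Cl → String → Set (List (Ty L Cl) × Ty L Cl)) :
    Exp L Cl → Exp L Cl → Prop where
  | var {Γ x T} : Γ x = some T →
      Refine1 fields methTypes (Exp.abs Γ T) (Exp.var x)
  | fieldAsgn {Γ s0 C0 f s mdf C} :
      (f, (⟨s, mdf, C⟩ : Ty L Cl)) ∈ fields C0 →
      Refine1 fields methTypes (Exp.abs Γ ⟨s0 ⊔ s, mdf, C⟩)
        (Exp.fieldAsgn (Exp.abs Γ ⟨s0, Mdf.mut, C0⟩) f (Exp.abs Γ ⟨s0 ⊔ s, mdf, C⟩))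
  | fieldAcc {Γ s0 mdf0 C0 f s1 mdf1 C mdf} :
      (f, (⟨s1, mdf1, C⟩ : Ty L Cl)) ∈ fields C0 →
      MdfComp mdf0 mdf1 mdf →
      Refine1 fields methTypes (Exp.abs Γ ⟨s0 ⊔ s1, mdf, C⟩)
        (Exp.fieldAcc (Exp.abs Γ ⟨s0, mdf0, C0⟩) f)
  | call {Γ T0 Ts T m} :
      (T0 :: Ts, T) ∈ methTypes T0.cls m →
      T0.sec ≤ T.sec →
      (∀ Ti ∈ Ts, (Ti.mdf = Mdf.mut ∨ Ti.mdf = Mdf.capsule) → T0.sec ≤ Ti.sec) →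
      Refine1 fields methTypes (Exp.abs Γ T)
        (Exp.call (Exp.abs Γ T0) m (Ts.map (fun Ti => Exp.abs Γ Ti)))
  | new {Γ s C} :
      Refine1 fields methTypes (Exp.abs Γ ⟨s, Mdf.mut, C⟩)
        (Exp.new s C ((fields C).map (fun ft => Exp.abs Γ (Ty.promote ft.2 s))))
  | sub {Γ T T'} : Ty.Sub T' T →
      Refine1 fields methTypes (Exp.abs Γ T) (Exp.abs Γ T')
  | secProm {Γ s s' mdf C} :
      (mdf = Mdf.imm ∨ mdf = Mdf.capsule) → s' ≤ s →
      Refine1 fields methTypes (Exp.abs Γ ⟨s, mdf, C⟩) (Exp.abs Γ ⟨s', mdf, C⟩)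
  | mdfProm {Γ s C} :
      Refine1 fields methTypes (Exp.abs Γ ⟨s, Mdf.capsule, C⟩)
        (Exp.abs (Ctx.mutToRead Γ) ⟨s, Mdf.mut, C⟩)
  | ctxFieldAcc {e e' f} : Refine1 fields methTypes e e' →
      Refine1 fields methTypes (Exp.fieldAcc e f) (Exp.fieldAcc e' f)
  | ctxFieldAsgn0 {e0 e0' f e1} : Refine1 fields methTypes e0 e0' →
      Refine1 fields methTypes (Exp.fieldAsgn e0 f e1) (Exp.fieldAsgn e0' f e1)
  | ctxFieldAsgn1 {e0 f e1 e1'} : Refine1 fields methTypes e1 e1' →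
      Refine1 fields methTypes (Exp.fieldAsgn e0 f e1) (Exp.fieldAsgn e0 f e1')
  | ctxCall0 {e0 e0' m args} : Refine1 fields methTypes e0 e0' →
      Refine1 fields methTypes (Exp.call e0 m args) (Exp.call e0' m args)
  | ctxCallArg {e0 m pre e e' post} : Refine1 fields methTypes e e' →
      Refine1 fields methTypes (Exp.call e0 m (pre ++ e :: post))
        (Exp.call e0 m (pre ++ e' :: post))
  | ctxNewArg {s C pre e e' post} : Refine1 fields methTypes e e' →
      Refine1 fields methTypes (Exp.new s C (pre ++ e :: post))
        (Exp.new s C (pre ++ e' :: post))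

/-- `eA` is fully refined to `e`: a finite sequence of one-step refinements. -/
abbrev FullRefine {L Cl : Type} [SemilatticeSup L] [PartialOrder Cl]
    (fields : Cl → List (String × Ty L Cl))
    (methTypes : Cl → String → Set (List (Ty L Cl) × Ty L Cl)) :
    Exp L Cl → Exp L Cl → Prop :=
  Relation.ReflTransGen (Refine1 fields methTypes)

/-!
Extend SIFO typing by the rule that `eA : [Γ; T]` has type `T` in `Γ`. Each refinement rule
replaces an abstract expression by the conclusion of the matching typing rule with fresh abstract
expressions as premises, so refinement preserves extended typing (inside a context, by induction
on the derivation). A concrete expression has no abstract subexpression, so its extended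
derivation is a SIFO derivation.
-/

theorem List.forall_mem_zip_map_self {α β : Type*} {P : β × α → Prop} {f : α → β}
    {l : List α} (h : ∀ a ∈ l, P (f a, a)) : ∀ p ∈ (l.map f).zip l, P p := by
  nth_rewrite 2 [← List.map_id l]
  rw [List.zip_map']
  simpa using h

theorem List.forall_mem_zip_append_cons {α β : Type*} {P : α × β → Prop} {a a' : α}
    {post : List α} :
    ∀ {pre : List α} {l : List β}, (∀ p ∈ (pre ++ a :: post).zip l, P p) →
    (∀ b, (a, b) ∈ (pre ++ a :: post).zip l → P (a', b)) →
    ∀ p ∈ (pre ++ a' :: post).zip l, P p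
  | _, [], _, _ => by simp
  | [], b :: l, h, ha => by
    simp only [List.nil_append, List.zip_cons_cons, List.forall_mem_cons] at h ⊢
    exact ⟨ha b (by simp), h.2⟩
  | c :: pre, b :: l, h, ha => by
    simp only [List.cons_append, List.zip_cons_cons, List.forall_mem_cons] at h ⊢
    exact ⟨h.1, forall_mem_zip_append_cons h.2 fun b' hb' => ha b' (by simp [hb'])⟩

inductive ExtTyping {L Cl : Type} [SemilatticeSup L] [PartialOrder Cl]
    (fields : Cl → List (String × Ty L Cl))
    (methTypes : Cl → String → Set (List (Ty L Cl) × Ty L Cl)) :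
    Ctx L Cl → Exp L Cl → Ty L Cl → Prop where
  | var {Γ x T} : Γ x = some T → ExtTyping fields methTypes Γ (Exp.var x) T
  | fieldAcc {Γ e0 s0 mdf0 C0 f s1 mdf1 C1 mdf} :
      ExtTyping fields methTypes Γ e0 ⟨s0, mdf0, C0⟩ →
      (f, (⟨s1, mdf1, C1⟩ : Ty L Cl)) ∈ fields C0 →
      MdfComp mdf0 mdf1 mdf →
      ExtTyping fields methTypes Γ (Exp.fieldAcc e0 f) ⟨s0 ⊔ s1, mdf, C1⟩
  | fieldAsgn {Γ e0 s0 C0 f s mdf C e1} :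
      ExtTyping fields methTypes Γ e0 ⟨s0, Mdf.mut, C0⟩ →
      (f, (⟨s, mdf, C⟩ : Ty L Cl)) ∈ fields C0 →
      ExtTyping fields methTypes Γ e1 ⟨s0 ⊔ s, mdf, C⟩ →
      ExtTyping fields methTypes Γ (Exp.fieldAsgn e0 f e1) ⟨s0 ⊔ s, mdf, C⟩
  | call {Γ e0 T0 m args Ts T} :
      ExtTyping fields methTypes Γ e0 T0 →
      args.length = Ts.length →
      (∀ p ∈ args.zip Ts, ExtTyping fields methTypes Γ p.1 p.2) →
      (T0 :: Ts, T) ∈ methTypes T0.cls m →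
      T0.sec ≤ T.sec →
      (∀ Ti ∈ Ts, (Ti.mdf = Mdf.mut ∨ Ti.mdf = Mdf.capsule) → T0.sec ≤ Ti.sec) →
      ExtTyping fields methTypes Γ (Exp.call e0 m args) T
  | new {Γ s C args} :
      args.length = (fields C).length →
      (∀ p ∈ args.zip (fields C), ExtTyping fields methTypes Γ p.1 (Ty.promote p.2.2 s)) →
      ExtTyping fields methTypes Γ (Exp.new s C args) ⟨s, Mdf.mut, C⟩
  | prom {Γ e s C} :
      ExtTyping fields methTypes (Ctx.mutToRead Γ) e ⟨s, Mdf.mut, C⟩ →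
      ExtTyping fields methTypes Γ e ⟨s, Mdf.capsule, C⟩
  | secProm {Γ e s' s mdf C} :
      ExtTyping fields methTypes Γ e ⟨s', mdf, C⟩ →
      (mdf = Mdf.imm ∨ mdf = Mdf.capsule) → s' ≤ s →
      ExtTyping fields methTypes Γ e ⟨s, mdf, C⟩
  | sub {Γ e T' T} :
      ExtTyping fields methTypes Γ e T' → Ty.Sub T' T →
      ExtTyping fields methTypes Γ e T
  | abs {Γ T} : ExtTyping fields methTypes Γ (Exp.abs Γ T) T

namespace ExtTyping

variable {L Cl : Type} [SemilatticeSup L] [PartialOrder Cl]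
  {fields : Cl → List (String × Ty L Cl)}
  {methTypes : Cl → String → Set (List (Ty L Cl) × Ty L Cl)}
  {Γ : Ctx L Cl} {T : Ty L Cl} {e e' : Exp L Cl}

theorem of_refine1_abs (h : Refine1 fields methTypes (Exp.abs Γ T) e') :
    ExtTyping fields methTypes Γ e' T := by
  cases h with
  | var hx => exact .var hx
  | fieldAsgn hf => exact .fieldAsgn .abs hf .abs
  | fieldAcc hf hcomp => exact .fieldAcc .abs hf hcomp
  | call hm hsec hargs =>
    exact .call .abs (by simp) (List.forall_mem_zip_map_self fun _ _ => .abs) hm hsec hargs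
  | new => exact .new (by simp) (List.forall_mem_zip_map_self fun _ _ => .abs)
  | sub hsub => exact .sub .abs hsub
  | secProm hmdf hle => exact .secProm .abs hmdf hle
  | mdfProm => exact .prom .abs

theorem refine1 (h : ExtTyping fields methTypes Γ e T) (hstep : Refine1 fields methTypes e e') :
    ExtTyping fields methTypes Γ e' T := by
  induction h generalizing e' with
  | var => cases hstep
  | fieldAcc _ hf hcomp ih =>
    cases hstep with
    | ctxFieldAcc h0 => exact .fieldAcc (ih h0) hf hcomp
  | fieldAsgn h0 hf h1 ih0 ih1 =>
    cases hstep with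
    | ctxFieldAsgn0 h => exact .fieldAsgn (ih0 h) hf h1
    | ctxFieldAsgn1 h => exact .fieldAsgn h0 hf (ih1 h)
  | call h0 hlen hargs hm hsec hsecArgs ih0 ihargs =>
    cases hstep with
    | ctxCall0 h => exact .call (ih0 h) hlen hargs hm hsec hsecArgs
    | ctxCallArg h =>
      refine .call h0 (by simpa using hlen) ?_ hm hsec hsecArgs
      exact List.forall_mem_zip_append_cons hargs fun Ti hTi => ihargs _ hTi h
  | new hlen hargs ihargs =>
    cases hstep with
    | ctxNewArg h =>
      refine .new (by simpa using hlen) ?_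
      exact List.forall_mem_zip_append_cons hargs fun ft hft => ihargs _ hft h
  | prom _ ih => exact .prom (ih hstep)
  | secProm _ hmdf hle ih => exact .secProm (ih hstep) hmdf hle
  | sub _ hsub ih => exact .sub (ih hstep) hsub
  | abs => exact of_refine1_abs hstep

theorem of_fullRefine_abs (h : FullRefine fields methTypes (Exp.abs Γ T) e) :
    ExtTyping fields methTypes Γ e T := by
  induction h with
  | refl => exact .abs
  | tail _ hstep ih => exact ih.refine1 hstep

theorem typing_of_concrete (h : ExtTyping fields methTypes Γ e T) (hconc : Concrete e) :
    Typing fields methTypes Γ e T := by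
  induction h with
  | var hx => exact .var hx
  | fieldAcc _ hf hcomp ih =>
    cases hconc with
    | fieldAcc hc0 => exact .fieldAcc (ih hc0) hf hcomp
  | fieldAsgn _ hf _ ih0 ih1 =>
    cases hconc with
    | fieldAsgn hc0 hc1 => exact .fieldAsgn (ih0 hc0) hf (ih1 hc1)
  | call _ hlen _ hm hsec hsecArgs ih0 ihargs =>
    cases hconc with
    | call hc0 hcargs =>
      exact .call (ih0 hc0) hlen (fun p hp => ihargs p hp (hcargs _ (List.of_mem_zip hp).1))
        hm hsec hsecArgs
  | new hlen _ ihargs =>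
    cases hconc with
    | new hcargs => exact .new hlen fun p hp => ihargs p hp (hcargs _ (List.of_mem_zip hp).1)
  | prom _ ih => exact .prom (ih hconc)
  | secProm _ hmdf hle ih => exact .secProm (ih hconc) hmdf hle
  | sub _ hsub ih => exact .sub (ih hconc) hsub
  | abs => cases hconc

end ExtTyping

theorem ifbcoo_soundness_general {L Cl : Type} [SemilatticeSup L]
    [PartialOrder Cl]
    (fields : Cl → List (String × Ty L Cl))
    (methTypes : Cl → String → Set (List (Ty L Cl) × Ty L Cl))
    (Γ : Ctx L Cl) (T : Ty L Cl) (e : Exp L Cl)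
    (href : FullRefine fields methTypes (Exp.abs Γ T) e)
    (hconc : Concrete e) :
    Typing fields methTypes Γ e T :=
  (ExtTyping.of_fullRefine_abs href).typing_of_concrete hconc

/-- **Theorem 1 (Soundness of IFbCOO).** If the abstract expression `eA : [Γ; T]`
is fully refined, by a finite sequence of IFbCOO core refinement steps, to a
concrete expression `e`, then `e` is well typed in SIFO: `Γ ⊢ e : T`. -/
theorem ifbcoo_soundness {L Cl : Type} [SemilatticeSup L] [BoundedOrder L]
    [PartialOrder Cl]
    (fields : Cl → List (String × Ty L Cl))
    (methTypes : Cl → String → Set (List (Ty L Cl) × Ty L Cl))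
    (Γ : Ctx L Cl) (T : Ty L Cl) (e : Exp L Cl)
    (href : FullRefine fields methTypes (Exp.abs Γ T) e)
    (hconc : Concrete e) :
    Typing fields methTypes Γ e T :=
  ifbcoo_soundness_general fields methTypes Γ T e href hconc
end

section
/- One-step refinement preserves extended typing: if an expression e (possibly containing abstract subexpressions) satisfies Γ ⊢ e : T in the extended typing system, and e refines in one step to e' by an IFbCOO core refinement rule (applied under any expression context), then Γ ⊢ e' : T in the extended typing system. -/
/-- The extended typing system: all SIFO typing rules, together with the
axiom that an abstract expression `eA : [Γ; T]` has type `T` in context `Γ`. -/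
inductive ETyping {L Cl : Type} [SemilatticeSup L] [PartialOrder Cl]
    (fields : Cl → List (String × Ty L Cl))
    (methTypes : Cl → String → Set (List (Ty L Cl) × Ty L Cl)) :
    Ctx L Cl → Exp L Cl → Ty L Cl → Prop where
  | abs {Γ T} : ETyping fields methTypes Γ (Exp.abs Γ T) T
  | var {Γ x T} : Γ x = some T → ETyping fields methTypes Γ (Exp.var x) T
  | fieldAcc {Γ e0 s0 mdf0 C0 f s1 mdf1 C1 mdf} :
      ETyping fields methTypes Γ e0 ⟨s0, mdf0, C0⟩ →
      (f, (⟨s1, mdf1, C1⟩ : Ty L Cl)) ∈ fields C0 →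
      MdfComp mdf0 mdf1 mdf →
      ETyping fields methTypes Γ (Exp.fieldAcc e0 f) ⟨s0 ⊔ s1, mdf, C1⟩
  | fieldAsgn {Γ e0 s0 C0 f s mdf C e1} :
      ETyping fields methTypes Γ e0 ⟨s0, Mdf.mut, C0⟩ →
      (f, (⟨s, mdf, C⟩ : Ty L Cl)) ∈ fields C0 →
      ETyping fields methTypes Γ e1 ⟨s0 ⊔ s, mdf, C⟩ →
      ETyping fields methTypes Γ (Exp.fieldAsgn e0 f e1) ⟨s0 ⊔ s, mdf, C⟩
  | call {Γ e0 T0 m args Ts T} :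
      ETyping fields methTypes Γ e0 T0 →
      args.length = Ts.length →
      (∀ p ∈ args.zip Ts, ETyping fields methTypes Γ p.1 p.2) →
      (T0 :: Ts, T) ∈ methTypes T0.cls m →
      T0.sec ≤ T.sec →
      (∀ Ti ∈ Ts, (Ti.mdf = Mdf.mut ∨ Ti.mdf = Mdf.capsule) → T0.sec ≤ Ti.sec) →
      ETyping fields methTypes Γ (Exp.call e0 m args) T
  | new {Γ s C args} :
      args.length = (fields C).length →
      (∀ p ∈ args.zip (fields C), ETyping fields methTypes Γ p.1 (Ty.promote p.2.2 s)) →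
      ETyping fields methTypes Γ (Exp.new s C args) ⟨s, Mdf.mut, C⟩
  | prom {Γ e s C} :
      ETyping fields methTypes (Ctx.mutToRead Γ) e ⟨s, Mdf.mut, C⟩ →
      ETyping fields methTypes Γ e ⟨s, Mdf.capsule, C⟩
  | secProm {Γ e s' s mdf C} :
      ETyping fields methTypes Γ e ⟨s', mdf, C⟩ →
      (mdf = Mdf.imm ∨ mdf = Mdf.capsule) → s' ≤ s →
      ETyping fields methTypes Γ e ⟨s, mdf, C⟩
  | sub {Γ e T' T} :
      ETyping fields methTypes Γ e T' → Ty.Sub T' T →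
      ETyping fields methTypes Γ e T

/-! Induction on the extended typing derivation of `e`. A base refinement rule rewrites an
abstract expression `eA : [Γ; T]` into the conclusion of the typing rule it mirrors, whose
premises are again abstract expressions typed by the axiom. A context rule rewrites a single
immediate subexpression, which keeps its type by the induction hypothesis. Promotion, security
promotion and subsumption do not inspect the expression, so they commute with refinement. -/

theorem List.forall_mem_zip_map_left {α β : Type*} {P : β × α → Prop} (f : α → β)
    (hf : ∀ a, P (f a, a)) : ∀ {l : List α}, ∀ p ∈ (l.map f).zip l, P p
  | [], _, hp => by simp at hp
  | a :: l, p, hp => by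
    rw [List.map_cons, List.zip_cons_cons, List.mem_cons] at hp
    rcases hp with rfl | hp
    · exact hf a
    · exact forall_mem_zip_map_left f hf p hp

theorem List.forall_mem_zip_replace {α β : Type*} {P : α × β → Prop} {a a' : α} :
    ∀ {pre post : List α} {l : List β}, (pre ++ a :: post).length = l.length →
      (∀ p ∈ (pre ++ a :: post).zip l, P p) →
      (∀ b, (a, b) ∈ (pre ++ a :: post).zip l → P (a', b)) →
      (pre ++ a' :: post).length = l.length ∧ ∀ p ∈ (pre ++ a' :: post).zip l, P p
  | _, _, [], hlen, _, _ => by simp at hlen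
  | [], post, b :: l, hlen, h, ha => by
    refine ⟨by simpa using hlen, fun p hp => ?_⟩
    rcases List.mem_cons.mp hp with rfl | hp
    · exact ha b List.mem_cons_self
    · exact h p (List.mem_cons_of_mem _ hp)
  | x :: pre, post, b :: l, hlen, h, ha => by
    obtain ⟨hlen', h'⟩ := forall_mem_zip_replace (pre := pre) (post := post) (l := l)
      (by simpa using hlen) (fun p hp => h p (List.mem_cons_of_mem _ hp))
      (fun b hb => ha b (List.mem_cons_of_mem _ hb))
    refine ⟨by simpa using hlen', fun p hp => ?_⟩
    rcases List.mem_cons.mp hp with rfl | hp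
    · exact h _ List.mem_cons_self
    · exact h' p hp

section
variable {L Cl : Type} [SemilatticeSup L] [PartialOrder Cl]
  {fields : Cl → List (String × Ty L Cl)}
  {methTypes : Cl → String → Set (List (Ty L Cl) × Ty L Cl)}

theorem ETyping.forall_mem_zip_abs (Γ : Ctx L Cl) {α : Type} (g : α → Ty L Cl) (l : List α) :
    ∀ p ∈ (l.map fun x => Exp.abs Γ (g x)).zip l, ETyping fields methTypes Γ p.1 (g p.2) :=
  List.forall_mem_zip_map_left _ fun _ => ETyping.abs

theorem ETyping.of_refine1_abs {Γ : Ctx L Cl} {T : Ty L Cl} {e' : Exp L Cl}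
    (hstep : Refine1 fields methTypes (Exp.abs Γ T) e') : ETyping fields methTypes Γ e' T := by
  cases hstep with
  | var hx => exact .var hx
  | fieldAsgn hf => exact .fieldAsgn .abs hf .abs
  | fieldAcc hf hc => exact .fieldAcc .abs hf hc
  | call hm hsec hargs =>
    exact .call .abs (List.length_map _) (forall_mem_zip_abs Γ id _) hm hsec hargs
  | new =>
    exact .new (List.length_map _)
      (forall_mem_zip_abs Γ (fun ft : String × Ty L Cl => ft.2.promote _) _)
  | sub hsub => exact .sub .abs hsub
  | secProm hmdf hle => exact .secProm .abs hmdf hle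
  | mdfProm => exact .prom .abs

end

theorem refine1_preserves_etyping_general {L Cl : Type} [SemilatticeSup L]
    [PartialOrder Cl]
    (fields : Cl → List (String × Ty L Cl))
    (methTypes : Cl → String → Set (List (Ty L Cl) × Ty L Cl))
    (Γ : Ctx L Cl) (e e' : Exp L Cl) (T : Ty L Cl)
    (htyp : ETyping fields methTypes Γ e T)
    (hstep : Refine1 fields methTypes e e') :
    ETyping fields methTypes Γ e' T := by
  induction htyp generalizing e' with
  | abs => exact .of_refine1_abs hstep
  | var => cases hstep
  | fieldAcc _ hf hc ih =>
    cases hstep with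
    | ctxFieldAcc hs => exact .fieldAcc (ih _ hs) hf hc
  | fieldAsgn h0 hf h1 ih0 ih1 =>
    cases hstep with
    | ctxFieldAsgn0 hs => exact .fieldAsgn (ih0 _ hs) hf h1
    | ctxFieldAsgn1 hs => exact .fieldAsgn h0 hf (ih1 _ hs)
  | call h0 hlen hargs hm hsec hsecs ih0 ihargs =>
    cases hstep with
    | ctxCall0 hs => exact .call (ih0 _ hs) hlen hargs hm hsec hsecs
    | @ctxCallArg _ _ _ _ e₁ _ hs =>
      obtain ⟨hlen', hargs'⟩ :=
        List.forall_mem_zip_replace (a' := e₁) hlen hargs fun _ hb => ihargs _ hb _ hs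
      exact .call h0 hlen' hargs' hm hsec hsecs
  | new hlen hargs ihargs =>
    cases hstep with
    | @ctxNewArg _ _ _ _ e₁ _ hs =>
      obtain ⟨hlen', hargs'⟩ :=
        List.forall_mem_zip_replace (a' := e₁) hlen hargs fun _ hb => ihargs _ hb _ hs
      exact .new hlen' hargs'
  | prom _ ih => exact .prom (ih _ hstep)
  | secProm _ hmdf hle ih => exact .secProm (ih _ hstep) hmdf hle
  | sub _ hsub ih => exact .sub (ih _ hstep) hsub

/-- **One-step refinement preserves extended typing.** If `Γ ⊢ e : T` in the
extended typing system and `e` refines in one step to `e'` (by an IFbCOO core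
refinement rule applied under any expression context), then `Γ ⊢ e' : T` in
the extended typing system. -/
theorem refine1_preserves_etyping {L Cl : Type} [SemilatticeSup L]
    [BoundedOrder L] [PartialOrder Cl]
    (fields : Cl → List (String × Ty L Cl))
    (methTypes : Cl → String → Set (List (Ty L Cl) × Ty L Cl))
    (Γ : Ctx L Cl) (e e' : Exp L Cl) (T : Ty L Cl)
    (htyp : ETyping fields methTypes Γ e T)
    (hstep : Refine1 fields methTypes e e') :
    ETyping fields methTypes Γ e' T :=
  refine1_preserves_etyping_general fields methTypes Γ e e' T htyp hstep
end

section
/- Decomposition of full refinements of compound expressions: if an abstract expression eA : [Γ; T] refines in its first step to eA0.f = eA1 (by the Field Assignment refinement rule, so eA0 : [Γ; s0 mut C0] and eA1 : [Γ; lub(s0, s) mdf C] with field f of C0 of type s mdf C and T = lub(s0, s) mdf C) and is subsequently fully refined to a concrete expression of the form e0.f = e1, then e0 is fully refined from eA0 and e1 is fully refined from eA1, each by a strictly shorter sequence of refinement steps (where all intermediate steps are applications of refinement rules under the Context rule). -/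
/-- `n`-step IFbCOO refinement. -/
inductive RefineN {L Cl : Type} [SemilatticeSup L] [PartialOrder Cl]
    (fields : Cl → List (String × Ty L Cl))
    (methTypes : Cl → String → Set (List (Ty L Cl) × Ty L Cl)) :
    ℕ → Exp L Cl → Exp L Cl → Prop where
  | refl (e) : RefineN fields methTypes 0 e e
  | step {n e e' e''} : Refine1 fields methTypes e e' →
      RefineN fields methTypes n e' e'' →
      RefineN fields methTypes (n + 1) e e''

namespace Refine1

variable {L Cl : Type} [SemilatticeSup L] [PartialOrder Cl]
  {fields : Cl → List (String × Ty L Cl)}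
  {methTypes : Cl → String → Set (List (Ty L Cl) × Ty L Cl)}

/-- Only the Context rule applies to a field assignment: no refinement rule has one on its left. -/
theorem fieldAsgn_inv {e0 e1 e' : Exp L Cl} {f : String}
    (h : Refine1 fields methTypes (Exp.fieldAsgn e0 f e1) e') :
    (∃ e0', Refine1 fields methTypes e0 e0' ∧ e' = Exp.fieldAsgn e0' f e1) ∨
      ∃ e1', Refine1 fields methTypes e1 e1' ∧ e' = Exp.fieldAsgn e0 f e1' := by
  cases h with
  | ctxFieldAsgn0 h0 => exact .inl ⟨_, h0, rfl⟩
  | ctxFieldAsgn1 h1 => exact .inr ⟨_, h1, rfl⟩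

end Refine1

namespace RefineN

variable {L Cl : Type} [SemilatticeSup L] [PartialOrder Cl]
  {fields : Cl → List (String × Ty L Cl)}
  {methTypes : Cl → String → Set (List (Ty L Cl) × Ty L Cl)}

theorem fieldAsgn_split {n : ℕ} {e0 e1 e : Exp L Cl} {f : String}
    (h : RefineN fields methTypes n (Exp.fieldAsgn e0 f e1) e) :
    ∃ n0 n1 e0' e1', n0 + n1 = n ∧ e = Exp.fieldAsgn e0' f e1' ∧
      RefineN fields methTypes n0 e0 e0' ∧ RefineN fields methTypes n1 e1 e1' := by
  induction n generalizing e0 e1 with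
  | zero =>
    cases h
    exact ⟨0, 0, e0, e1, rfl, rfl, .refl _, .refl _⟩
  | succ n ih =>
    obtain _ | ⟨hstep, hrest⟩ := h
    rcases hstep.fieldAsgn_inv with ⟨e0', h0, rfl⟩ | ⟨e1', h1, rfl⟩
    · obtain ⟨n0, n1, e0'', e1'', hn, he, r0, r1⟩ := ih hrest
      exact ⟨n0 + 1, n1, e0'', e1'', by omega, he, .step h0 r0, r1⟩
    · obtain ⟨n0, n1, e0'', e1'', hn, he, r0, r1⟩ := ih hrest
      exact ⟨n0, n1 + 1, e0'', e1'', by omega, he, r0, .step h1 r1⟩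

end RefineN

theorem ifbcoo_decomposition_general {L Cl : Type} [SemilatticeSup L]
    [PartialOrder Cl]
    (fields : Cl → List (String × Ty L Cl))
    (methTypes : Cl → String → Set (List (Ty L Cl) × Ty L Cl))
    (Γ : Ctx L Cl) (s0 s : L) (mdf : Mdf) (C0 C : Cl) (f : String)
    (n : ℕ) (e0 e1 : Exp L Cl)
    (hrest : RefineN fields methTypes n
      (Exp.fieldAsgn (Exp.abs Γ ⟨s0, Mdf.mut, C0⟩) f
        (Exp.abs Γ ⟨s0 ⊔ s, mdf, C⟩))
      (Exp.fieldAsgn e0 f e1)) :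
    ∃ n0 n1, n0 < n + 1 ∧ n1 < n + 1 ∧
      RefineN fields methTypes n0 (Exp.abs Γ ⟨s0, Mdf.mut, C0⟩) e0 ∧
      RefineN fields methTypes n1 (Exp.abs Γ ⟨s0 ⊔ s, mdf, C⟩) e1 := by
  obtain ⟨n0, n1, _, _, hn, he, r0, r1⟩ := hrest.fieldAsgn_split
  cases he
  exact ⟨n0, n1, by omega, by omega, r0, r1⟩

/-- **Decomposition of full refinements of compound expressions.** If the
abstract expression `eA : [Γ; lub(s0,s) mdf C]` refines in its first step, by
the Field Assignment refinement rule (with `eA0 : [Γ; s0 mut C0]`,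
`eA1 : [Γ; lub(s0,s) mdf C]` and field `f` of `C0` of type `s mdf C`), to
`eA0.f = eA1`, and is subsequently fully refined (in `n` further one-step
refinements, applications of refinement rules under the Context rule) to a
concrete expression of the form `e0.f = e1`, then `e0` is fully refined from
`eA0` and `e1` is fully refined from `eA1`, each by a strictly shorter
sequence of refinement steps than the original `n + 1` steps. -/
theorem ifbcoo_decomposition {L Cl : Type} [SemilatticeSup L] [BoundedOrder L]
    [PartialOrder Cl]
    (fields : Cl → List (String × Ty L Cl))
    (methTypes : Cl → String → Set (List (Ty L Cl) × Ty L Cl))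
    (Γ : Ctx L Cl) (s0 s : L) (mdf : Mdf) (C0 C : Cl) (f : String)
    (n : ℕ) (e0 e1 : Exp L Cl)
    (hf : (f, (⟨s, mdf, C⟩ : Ty L Cl)) ∈ fields C0)
    (hfirst : Refine1 fields methTypes (Exp.abs Γ ⟨s0 ⊔ s, mdf, C⟩)
      (Exp.fieldAsgn (Exp.abs Γ ⟨s0, Mdf.mut, C0⟩) f
        (Exp.abs Γ ⟨s0 ⊔ s, mdf, C⟩)))
    (hrest : RefineN fields methTypes n
      (Exp.fieldAsgn (Exp.abs Γ ⟨s0, Mdf.mut, C0⟩) f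
        (Exp.abs Γ ⟨s0 ⊔ s, mdf, C⟩))
      (Exp.fieldAsgn e0 f e1))
    (hc0 : Concrete e0) (hc1 : Concrete e1) :
    ∃ n0 n1, n0 < n + 1 ∧ n1 < n + 1 ∧
      RefineN fields methTypes n0 (Exp.abs Γ ⟨s0, Mdf.mut, C0⟩) e0 ∧
      RefineN fields methTypes n1 (Exp.abs Γ ⟨s0 ⊔ s, mdf, C⟩) e1 :=
  ifbcoo_decomposition_general fields methTypes Γ s0 s mdf C0 C f n e0 e1 hrest
end
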